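/- arXiv:2405.13102 — 2 statements merged into one kernel-verified Lean document; each statement's English description precedes it below -/
import Mathlib

section
/- Let E be uniformly distributed on [0,1] and, conditionally on E = ε, let B1, ..., Bn be i.i.d. Bernoulli(ε). Then E[(E − E[E | B1,...,Bn])²] ≥ ∫₀¹ (ε(1−ε)/n − (1/(n/2+1))·√(ε(1−ε)/n)) dε. -/
/-!
Given the observations, `E` has the `Beta(k + 1, n - k + 1)` posterior, `k` being the number of
successes, so the conditional expectation is Laplace's estimate `(k + 1) / (n + 2)`. Integrating
over the atoms `{B = b}` turns the mean squared error into
`∫₀¹ ∑ₖ (ε - (k + 1) / (n + 2))² C(n, k) εᵏ (1 - ε)ⁿ⁻ᵏ dε`. Since `(k + 1) / (n + 2)` lies within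
`1 / (n + 2)` of `k / n`, expanding the square bounds the integrand below by the binomial variance
`ε (1 - ε) / n` of `k / n` minus `2 / (n + 2)` times its mean absolute deviation, and the latter is
at most the standard deviation by Cauchy–Schwarz.
-/

open MeasureTheory ProbabilityTheory Finset Set Function
open scoped unitInterval

namespace bernstein

variable {n : ℕ}

lemma sum_abs_sub_z_mul_le (hn : n ≠ 0) (x : I) :
    ∑ k : Fin (n + 1), |(x : ℝ) - z k| * bernstein n k x ≤ √((x : ℝ) * (1 - x) / n) := by
  refine Real.le_sqrt_of_sq_le ?_
  calc (∑ k : Fin (n + 1), |(x : ℝ) - z k| * bernstein n k x) ^ 2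
      ≤ (∑ k : Fin (n + 1), ((x : ℝ) - z k) ^ 2 * bernstein n k x) *
          ∑ k : Fin (n + 1), bernstein n k x :=
        sum_sq_le_sum_mul_sum_of_sq_le_mul _ (fun _ _ => by positivity) (fun _ _ => by positivity)
          fun k _ => le_of_eq (by rw [mul_pow, sq_abs]; ring)
    _ = (x : ℝ) * (1 - x) / n := by rw [variance hn, probability, mul_one]

lemma variance_sub_le_sum_sq_sub_mul (hn : n ≠ 0) (x : I) {θ : Fin (n + 1) → ℝ} {δ : ℝ}
    (hθ : ∀ k, |θ k - z k| ≤ δ) :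
    (x : ℝ) * (1 - x) / n - 2 * δ * √((x : ℝ) * (1 - x) / n)
      ≤ ∑ k : Fin (n + 1), ((x : ℝ) - θ k) ^ 2 * bernstein n k x := by
  have hδ : 0 ≤ δ := (abs_nonneg _).trans (hθ 0)
  have hterm : ∀ k, (((x : ℝ) - z k) ^ 2 - 2 * δ * |(x : ℝ) - z k|) * bernstein n k x
      ≤ ((x : ℝ) - θ k) ^ 2 * bernstein n k x := by
    intro k
    gcongr ?_ * _
    have hcross : ((x : ℝ) - z k) * (θ k - z k) ≤ |(x : ℝ) - z k| * δ := by
      grw [← hθ k, ← abs_mul]; exact le_abs_self _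
    nlinarith [sq_nonneg (θ k - z k)]
  calc (x : ℝ) * (1 - x) / n - 2 * δ * √((x : ℝ) * (1 - x) / n)
      ≤ (x : ℝ) * (1 - x) / n - 2 * δ * ∑ k : Fin (n + 1), |(x : ℝ) - z k| * bernstein n k x := by
        gcongr; exact sum_abs_sub_z_mul_le hn x
    _ = ∑ k : Fin (n + 1), (((x : ℝ) - z k) ^ 2 - 2 * δ * |(x : ℝ) - z k|) * bernstein n k x := by
        rw [← variance hn, mul_sum, ← sum_sub_distrib]
        exact sum_congr rfl fun k _ => by ring
    _ ≤ _ := sum_le_sum fun k _ => hterm k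

end bernstein

lemma abs_succ_div_add_two_sub_div_le {n k : ℕ} (hn : n ≠ 0) (hk : k ≤ n) :
    |((k : ℝ) + 1) / (n + 2) - k / n| ≤ 1 / (n + 2) := by
  have hn' : (0 : ℝ) < n := by positivity
  have hk' : (k : ℝ) ≤ n := by exact_mod_cast hk
  have hdiff : ((k : ℝ) + 1) / (n + 2) - k / n = ((n : ℝ) - 2 * k) / n / (n + 2) := by
    field_simp; ring
  have hnum : |(n : ℝ) - 2 * k| / n ≤ 1 := by
    rw [div_le_one hn', abs_le]; constructor <;> linarith [(k.cast_nonneg : (0 : ℝ) ≤ k)]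
  rw [hdiff, abs_div, abs_div, abs_of_pos hn', abs_of_pos (by positivity : (0 : ℝ) < n + 2)]
  gcongr

lemma integral_pow_succ_mul_one_sub_pow (a c : ℕ) :
    ∫ x in Icc (0 : ℝ) 1, x ^ (a + 1) * (1 - x) ^ c
      = (a + 1) / (a + c + 2) * ∫ x in Icc (0 : ℝ) 1, x ^ a * (1 - x) ^ c := by
  have hcont : ∀ p q : ℕ, Continuous fun x : ℝ => x ^ p * (1 - x) ^ q := by fun_prop
  -- `x ^ (a + 1) * (1 - x) ^ (c + 1)` vanishes at both ends, and its derivative is a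
  -- combination of the two integrands
  have hderiv : ∀ x : ℝ, HasDerivAt (fun x : ℝ => x ^ (a + 1) * (1 - x) ^ (c + 1))
      ((a + 1) * (x ^ a * (1 - x) ^ c) - (a + c + 2) * (x ^ (a + 1) * (1 - x) ^ c)) x := by
    intro x
    have hx : HasDerivAt (fun x : ℝ => x ^ (a + 1)) ((a + 1) * x ^ a) x := by
      simpa using hasDerivAt_pow (a + 1) x
    have hy : HasDerivAt (fun x : ℝ => (1 - x) ^ (c + 1)) ((c + 1) * (1 - x) ^ c * -1) x := by
      simpa using ((hasDerivAt_id x).const_sub 1).fun_pow (c + 1)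
    exact (hx.mul hy).congr_deriv (by ring)
  have hftc := intervalIntegral.integral_eq_sub_of_hasDerivAt (a := 0) (b := 1)
    (fun x _ => hderiv x) (by apply Continuous.intervalIntegrable; fun_prop)
  rw [intervalIntegral.integral_sub (((hcont a c).intervalIntegrable ..).const_mul _)
    (((hcont (a + 1) c).intervalIntegrable ..).const_mul _), intervalIntegral.integral_const_mul,
    intervalIntegral.integral_const_mul] at hftc
  simp only [integral_Icc_eq_integral_Ioc, ← intervalIntegral.integral_of_le zero_le_one]
  rw [div_mul_eq_mul_div, eq_div_iff (by positivity)]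
  norm_num at hftc
  linarith

lemma setIntegral_comp_eq_setIntegral_mul {Ω : Type*} [MeasurableSpace Ω] {μ : Measure Ω}
    {X : Ω → ℝ} (hX : Measurable X) {A : Set Ω} {K : Set ℝ} (hK : MeasurableSet K)
    {w : ℝ → ℝ} (hw : Measurable w) (hwK : IntegrableOn w K) (hw0 : ∀ x ∈ K, 0 ≤ w x)
    (hlaw : ∀ S, MeasurableSet S → μ (X ⁻¹' S ∩ A) = ENNReal.ofReal (∫ x in S ∩ K, w x))
    {φ : ℝ → ℝ} (hφ : Measurable φ) :
    ∫ ω in A, φ (X ω) ∂μ = ∫ x in K, φ x * w x := by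
  have hmap : (μ.restrict A).map X
      = (volume.restrict K).withDensity fun x => ENNReal.ofReal (w x) := by
    ext S hS
    rw [Measure.map_apply hX hS, Measure.restrict_apply (hX hS), hlaw S hS,
      withDensity_apply _ hS, Measure.restrict_restrict hS,
      ofReal_integral_eq_lintegral_ofReal (hwK.mono_set inter_subset_right)
        (ae_restrict_of_forall_mem (hS.inter hK) fun x hx => hw0 x hx.2)]
  rw [← integral_map hX.aemeasurable hφ.aestronglyMeasurable, hmap,
    integral_withDensity_eq_integral_toReal_smul hw.ennreal_ofReal
      (ae_of_all _ fun _ => ENNReal.ofReal_lt_top)]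
  refine setIntegral_congr_fun hK fun x hx => ?_
  rw [ENNReal.toReal_ofReal (hw0 x hx), smul_eq_mul, mul_comm]

namespace UniformBernoulli

variable {n : ℕ}

def numTrue (b : Fin n → Bool) : ℕ := #{i | b i = true}

def numFalse (b : Fin n → Bool) : ℕ := #{i | b i = false}

def likelihood (b : Fin n → Bool) (ε : ℝ) : ℝ := ε ^ numTrue b * (1 - ε) ^ numFalse b

lemma numTrue_add_numFalse (b : Fin n → Bool) : numTrue b + numFalse b = n := by
  simpa [numTrue, numFalse] using
    card_filter_add_card_filter_not (s := univ) (p := fun i => b i = true)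

lemma sum_comp_numTrue (f : ℕ → ℝ) :
    ∑ b : Fin n → Bool, f (numTrue b) = ∑ k ∈ range (n + 1), n.choose k * f k := by
  have hbij : ∑ b : Fin n → Bool, f (numTrue b) = ∑ s ∈ (univ : Finset (Fin n)).powerset, f #s :=
    sum_nbij' (fun b => ({i | b i = true} : Finset (Fin n))) (fun s i => decide (i ∈ s))
      (by simp) (by simp) (fun b _ => by ext; simp) (fun s _ => by ext; simp) (fun b _ => rfl)
  rw [hbij, sum_powerset_apply_card, card_univ, Fintype.card_fin]
  simp [nsmul_eq_mul]

lemma sum_mul_likelihood (f : ℕ → ℝ) (x : I) :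
    ∑ b : Fin n → Bool, f (numTrue b) * likelihood b x
      = ∑ k : Fin (n + 1), f k * bernstein n k x := by
  have hfalse : ∀ b : Fin n → Bool, numFalse b = n - numTrue b := fun b => by
    have := numTrue_add_numFalse b; omega
  simp only [likelihood, hfalse, bernstein_apply]
  rw [sum_comp_numTrue (fun k => f k * ((x : ℝ) ^ k * (1 - x) ^ (n - k))),
    Fin.sum_univ_eq_sum_range (fun k => f k * (n.choose k * (x : ℝ) ^ k * (1 - x) ^ (n - k)))]
  exact sum_congr rfl fun k _ => by ring

@[fun_prop]
lemma continuous_likelihood (b : Fin n → Bool) : Continuous (likelihood b) := by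
  unfold likelihood; fun_prop

lemma likelihood_nonneg (b : Fin n → Bool) {ε : ℝ} (hε : ε ∈ Icc (0 : ℝ) 1) :
    0 ≤ likelihood b ε :=
  mul_nonneg (pow_nonneg hε.1 _) (pow_nonneg (sub_nonneg.mpr hε.2) _)

lemma setIntegral_mul_likelihood (b : Fin n → Bool) :
    ∫ ε in Icc (0 : ℝ) 1, ε * likelihood b ε
      = (numTrue b + 1) / (n + 2) * ∫ ε in Icc (0 : ℝ) 1, likelihood b ε := by
  have hn : (numTrue b : ℝ) + numFalse b = n := by exact_mod_cast numTrue_add_numFalse b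
  simp only [likelihood, ← mul_assoc, ← pow_succ']
  rw [integral_pow_succ_mul_one_sub_pow, hn]

section Model

variable {Ω : Type*} {B : Fin n → Ω → ℝ}

def outcomeSet (B : Fin n → Ω → ℝ) (b : Fin n → Bool) : Set Ω :=
  {ω | ∀ i, B i ω = if b i then 1 else 0}

noncomputable def posteriorMean (B : Fin n → Ω → ℝ) (ω : Ω) : ℝ := (∑ i, B i ω + 1) / (n + 2)

lemma pairwise_disjoint_outcomeSet (B : Fin n → Ω → ℝ) : Pairwise (Disjoint on outcomeSet B) := by
  intro b b' hne
  obtain ⟨i, hi⟩ := Function.ne_iff.mp hne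
  refine Set.disjoint_left.mpr fun ω hω hω' => hi ?_
  have hif := (hω i).symm.trans (hω' i)
  revert hif
  cases b i <;> cases b' i <;> simp

lemma iUnion_outcomeSet (hB01 : ∀ i ω, B i ω = 0 ∨ B i ω = 1) : ⋃ b, outcomeSet B b = univ :=
  eq_univ_of_forall fun ω => mem_iUnion.mpr
    ⟨fun i => decide (B i ω = 1), fun i => by rcases hB01 i ω with h | h <;> simp [h]⟩

lemma fun_eq_of_mem_outcomeSet {b : Fin n → Bool} {ω : Ω} (hω : ω ∈ outcomeSet B b) :
    (fun i => B i ω) = fun i => if b i then 1 else 0 :=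
  funext hω

lemma posteriorMean_of_mem_outcomeSet {b : Fin n → Bool} {ω : Ω} (hω : ω ∈ outcomeSet B b) :
    posteriorMean B ω = (numTrue b + 1) / (n + 2) := by
  simp [posteriorMean, hω _, numTrue, sum_boole]

lemma posteriorMean_mem_Icc (hB01 : ∀ i ω, B i ω = 0 ∨ B i ω = 1) (ω : Ω) :
    posteriorMean B ω ∈ Icc (0 : ℝ) 1 := by
  have hB : ∀ i, 0 ≤ B i ω ∧ B i ω ≤ 1 := fun i => by rcases hB01 i ω with h | h <;> simp [h]
  have hsum : ∑ i, B i ω ≤ n :=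
    (sum_le_sum fun i _ => (hB i).2).trans_eq (by simp)
  have hsum0 : 0 ≤ ∑ i, B i ω := sum_nonneg fun i _ => (hB i).1
  constructor
  · unfold posteriorMean; positivity
  · rw [posteriorMean, div_le_one (by positivity)]; linarith

variable [MeasurableSpace Ω] {μ : Measure Ω} {E : Ω → ℝ}

def HasUniformBernoulliLaw (μ : Measure Ω) (E : Ω → ℝ) (B : Fin n → Ω → ℝ) : Prop :=
  ∀ (b : Fin n → Bool) (S : Set ℝ), MeasurableSet S →
    μ (E ⁻¹' S ∩ outcomeSet B b) = ENNReal.ofReal (∫ ε in S ∩ Icc (0 : ℝ) 1, likelihood b ε)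

lemma measurableSet_outcomeSet (hB : ∀ i, Measurable (B i)) (b : Fin n → Bool) :
    MeasurableSet (outcomeSet B b) := by
  simp only [outcomeSet, ofPred_forall]
  exact .iInter fun i => hB i (measurableSet_singleton _)

lemma integral_eq_sum_outcomeSet (hB : ∀ i, Measurable (B i))
    (hB01 : ∀ i ω, B i ω = 0 ∨ B i ω = 1) {h : Ω → ℝ} (hh : Integrable h μ) :
    ∫ ω, h ω ∂μ = ∑ b, ∫ ω in outcomeSet B b, h ω ∂μ := by
  rw [← setIntegral_univ, ← iUnion_outcomeSet hB01, integral_iUnion_fintype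
    (measurableSet_outcomeSet hB) (pairwise_disjoint_outcomeSet B) fun _ => hh.integrableOn]

lemma ae_mem_Icc (hB01 : ∀ i ω, B i ω = 0 ∨ B i ω = 1) (hlaw : HasUniformBernoulliLaw μ E B) :
    ∀ᵐ ω ∂μ, E ω ∈ Icc (0 : ℝ) 1 := by
  have hnull : ∀ b, μ (E ⁻¹' (Icc 0 1)ᶜ ∩ outcomeSet B b) = 0 := fun b => by
    rw [hlaw b _ measurableSet_Icc.compl, compl_inter_self, Measure.restrict_empty,
      integral_zero_measure, ENNReal.ofReal_zero]
  refine ae_iff.mpr (measure_mono_null (fun ω hω => ?_) (measure_iUnion_null hnull))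
  obtain ⟨b, hb⟩ := mem_iUnion.mp (iUnion_outcomeSet hB01 ▸ mem_univ ω)
  exact mem_iUnion.mpr ⟨b, hω, hb⟩

lemma setIntegral_outcomeSet_comp (hE : Measurable E) (hlaw : HasUniformBernoulliLaw μ E B)
    (b : Fin n → Bool) {φ : ℝ → ℝ} (hφ : Measurable φ) :
    ∫ ω in outcomeSet B b, φ (E ω) ∂μ = ∫ ε in Icc (0 : ℝ) 1, φ ε * likelihood b ε :=
  setIntegral_comp_eq_setIntegral_mul hE measurableSet_Icc (continuous_likelihood b).measurable
    (continuous_likelihood b).integrableOn_Icc (fun _ => likelihood_nonneg b) (hlaw b) hφ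

lemma setIntegral_outcomeSet_posteriorMean (hE : Measurable E) (hB : ∀ i, Measurable (B i))
    (hlaw : HasUniformBernoulliLaw μ E B) (b : Fin n → Bool) :
    ∫ ω in outcomeSet B b, posteriorMean B ω ∂μ = ∫ ω in outcomeSet B b, E ω ∂μ :=
  calc ∫ ω in outcomeSet B b, posteriorMean B ω ∂μ
      = ∫ ω in outcomeSet B b, (fun _ => ((numTrue b : ℝ) + 1) / (n + 2)) (E ω) ∂μ :=
        setIntegral_congr_fun (measurableSet_outcomeSet hB b)
          fun _ hω => posteriorMean_of_mem_outcomeSet hω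
    _ = ∫ ε in Icc (0 : ℝ) 1, ((numTrue b : ℝ) + 1) / (n + 2) * likelihood b ε :=
        setIntegral_outcomeSet_comp hE hlaw b measurable_const
    _ = ∫ ε in Icc (0 : ℝ) 1, ε * likelihood b ε := by
        rw [integral_const_mul, setIntegral_mul_likelihood]
    _ = ∫ ω in outcomeSet B b, E ω ∂μ :=
        (setIntegral_outcomeSet_comp hE hlaw b (φ := fun x => x) measurable_id).symm

lemma posteriorMean_ae_eq_condExp [IsFiniteMeasure μ] (hE : Measurable E)
    (hB : ∀ i, Measurable (B i)) (hB01 : ∀ i ω, B i ω = 0 ∨ B i ω = 1)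
    (hlaw : HasUniformBernoulliLaw μ E B) :
    posteriorMean B =ᵐ[μ] μ[E | MeasurableSpace.comap (fun ω i => B i ω) inferInstance] := by
  have hf : Measurable fun ω i => B i ω := measurable_pi_lambda _ hB
  have hg : Measurable[MeasurableSpace.comap (fun ω i => B i ω) inferInstance]
      (posteriorMean B) :=
    (by fun_prop : Measurable fun v : Fin n → ℝ => (∑ i, v i + 1) / (n + 2)).comp
      (comap_measurable _)
  have hEi : Integrable E μ := .of_mem_Icc 0 1 hE.aemeasurable (ae_mem_Icc hB01 hlaw)
  have hgi : Integrable (posteriorMean B) μ :=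
    .of_mem_Icc 0 1 (by unfold posteriorMean; fun_prop) (ae_of_all _ (posteriorMean_mem_Icc hB01))
  refine ae_eq_condExp_of_forall_setIntegral_eq hf.comap_le hEi (fun _ _ _ => hgi.integrableOn)
    ?_ hg.aestronglyMeasurable
  rintro _ ⟨S, -, rfl⟩ -
  rw [integral_eq_sum_outcomeSet hB hB01 hgi.restrict,
    integral_eq_sum_outcomeSet hB hB01 hEi.restrict]
  refine sum_congr rfl fun b _ => ?_
  simp only [Measure.restrict_restrict (measurableSet_outcomeSet hB b)]
  -- the observation vector is constant on `outcomeSet B b`, so the atom lies inside or outside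
  -- the preimage of `S`
  by_cases hv : (fun i => if b i then (1 : ℝ) else 0) ∈ S
  · have hsub : outcomeSet B b ⊆ (fun ω i => B i ω) ⁻¹' S := fun ω hω => by
      rwa [Set.mem_preimage, fun_eq_of_mem_outcomeSet hω]
    rw [Set.inter_eq_left.mpr hsub]
    exact setIntegral_outcomeSet_posteriorMean hE hB hlaw b
  · have hempty : outcomeSet B b ∩ (fun ω i => B i ω) ⁻¹' S = ∅ :=
      Set.eq_empty_of_forall_notMem fun ω ⟨hω, hωS⟩ => hv <| by
        rwa [Set.mem_preimage, fun_eq_of_mem_outcomeSet hω] at hωS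
    simp [hempty]

lemma integral_sq_sub_posteriorMean [IsFiniteMeasure μ] (hE : Measurable E)
    (hB : ∀ i, Measurable (B i)) (hB01 : ∀ i ω, B i ω = 0 ∨ B i ω = 1)
    (hlaw : HasUniformBernoulliLaw μ E B) :
    ∫ ω, (E ω - posteriorMean B ω) ^ 2 ∂μ
      = ∫ ε in Icc (0 : ℝ) 1,
          ∑ b : Fin n → Bool, (ε - ((numTrue b : ℝ) + 1) / (n + 2)) ^ 2 * likelihood b ε := by
  have hsq : Integrable (fun ω => (E ω - posteriorMean B ω) ^ 2) μ := by
    refine .of_mem_Icc 0 1 (by unfold posteriorMean; fun_prop) ?_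
    filter_upwards [ae_mem_Icc hB01 hlaw] with ω hω
    have hg := posteriorMean_mem_Icc hB01 ω
    exact ⟨sq_nonneg _, by nlinarith [hω.1, hω.2, hg.1, hg.2]⟩
  rw [integral_eq_sum_outcomeSet hB hB01 hsq, integral_finsetSum _ fun b _ =>
    Continuous.integrableOn_Icc (by fun_prop)]
  refine sum_congr rfl fun b _ => ?_
  rw [setIntegral_congr_fun (measurableSet_outcomeSet hB b)
    fun ω hω => by rw [posteriorMean_of_mem_outcomeSet hω]]
  exact setIntegral_outcomeSet_comp hE hlaw b
    (φ := fun ε => (ε - ((numTrue b : ℝ) + 1) / (n + 2)) ^ 2) (by fun_prop)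

end Model

end UniformBernoulli

open UniformBernoulli

theorem stmt_12 {Ω : Type*} [m0 : MeasurableSpace Ω] (μ : Measure Ω) [IsProbabilityMeasure μ]
    (n : ℕ) (hn : 0 < n)
    (E : Ω → ℝ) (B : Fin n → Ω → ℝ)
    (hE : Measurable E) (hB : ∀ i, Measurable (B i))
    (hB01 : ∀ i ω, B i ω = 0 ∨ B i ω = 1)
    (hjoint : ∀ (b : Fin n → Bool) (S : Set ℝ), MeasurableSet S →
      μ {ω | E ω ∈ S ∧ ∀ i, B i ω = (if b i then (1:ℝ) else 0)} =
        ENNReal.ofReal (∫ ε in S ∩ Set.Icc (0:ℝ) 1,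
          ε ^ (Finset.univ.filter fun i => b i = true).card *
            (1 - ε) ^ (Finset.univ.filter fun i => b i = false).card)) :
    ∫ ε in Set.Icc (0:ℝ) 1,
        (ε * (1 - ε) / n - (1 / ((n : ℝ) / 2 + 1)) * Real.sqrt (ε * (1 - ε) / n))
      ≤ ∫ ω, (E ω - MeasureTheory.condExp
          (MeasurableSpace.comap (fun ω' => fun i => B i ω') inferInstance) μ E ω)^2 ∂μ := by
  have hlaw : HasUniformBernoulliLaw μ E B := hjoint
  have hsq : (fun ω => (E ω - posteriorMean B ω) ^ 2) =ᵐ[μ] fun ω => (E ω - μ[E |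
      MeasurableSpace.comap (fun ω' => fun i => B i ω') inferInstance] ω) ^ 2 := by
    filter_upwards [posteriorMean_ae_eq_condExp hE hB hB01 hlaw] with ω hω
    rw [hω]
  rw [← integral_congr_ae hsq, integral_sq_sub_posteriorMean hE hB hB01 hlaw]
  refine setIntegral_mono_on (Continuous.integrableOn_Icc (by fun_prop))
    (Continuous.integrableOn_Icc (by fun_prop)) measurableSet_Icc fun ε hε => ?_
  have hδ : 1 / ((n : ℝ) / 2 + 1) = 2 * (1 / (n + 2)) := by field_simp
  rw [hδ, sum_mul_likelihood (fun k => (ε - ((k : ℝ) + 1) / (n + 2)) ^ 2) ⟨ε, hε⟩]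
  exact bernstein.variance_sub_le_sum_sq_sub_mul hn.ne' ⟨ε, hε⟩
    fun k => abs_succ_div_add_two_sub_div_le hn.ne' k.is_le
end

section
/- For ε in [−1/4, 1/4], let ν_ε be the distribution on [0,1] assigning mass (1−ε)/4 to 0, mass 1/4 to 1/3, mass 1/4 to 2/3, and mass (1+ε)/4 to 1. Let V1, V2 be i.i.d. with distribution ν_ε and let G(p) = P[min(V1,V2) ≤ p ≤ max(V1,V2)]. Then G(1/3) = 11/16 − ε/8 − ε²/8 and G(2/3) = 11/16 + ε/8 − ε²/8; in particular G(2/3) − G(1/3) = ε/4. -/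
open MeasureTheory ProbabilityTheory

lemma aux_G {Ω : Type*} [MeasurableSpace Ω] (μ : Measure Ω) [IsProbabilityMeasure μ]
    (V1 V2 : Ω → ℝ) (hV1 : Measurable V1) (hV2 : Measurable V2)
    (hindep : IndepFun V1 V2 μ) (ν : Measure ℝ)
    (hlaw1 : Measure.map V1 μ = ν) (hlaw2 : Measure.map V2 μ = ν)
    (p a b : ℝ) (ha : 0 ≤ a) (hb : 0 ≤ b)
    (hIoi : ν (Set.Ioi p) = ENNReal.ofReal a) (hIio : ν (Set.Iio p) = ENNReal.ofReal b) :
    (μ {ω | min (V1 ω) (V2 ω) ≤ p ∧ p ≤ max (V1 ω) (V2 ω)}).toReal = 1 - a^2 - b^2 := by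
  set S : Set Ω := {ω | min (V1 ω) (V2 ω) ≤ p ∧ p ≤ max (V1 ω) (V2 ω)} with hS
  have hSmeas : MeasurableSet S := by
    have : S = (fun ω => min (V1 ω) (V2 ω)) ⁻¹' Set.Iic p ∩
        (fun ω => max (V1 ω) (V2 ω)) ⁻¹' Set.Ici p := rfl
    rw [this]
    exact ((hV1.min hV2) measurableSet_Iic).inter ((hV1.max hV2) measurableSet_Ici)
  have hA1meas : MeasurableSet (V1 ⁻¹' Set.Ioi p ∩ V2 ⁻¹' Set.Ioi p) :=
    (hV1 measurableSet_Ioi).inter (hV2 measurableSet_Ioi)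
  have hA2meas : MeasurableSet (V1 ⁻¹' Set.Iio p ∩ V2 ⁻¹' Set.Iio p) :=
    (hV1 measurableSet_Iio).inter (hV2 measurableSet_Iio)
  have hcompl : Sᶜ = (V1 ⁻¹' Set.Ioi p ∩ V2 ⁻¹' Set.Ioi p) ∪
      (V1 ⁻¹' Set.Iio p ∩ V2 ⁻¹' Set.Iio p) := by
    ext ω
    simp only [hS, Set.mem_compl_iff, Set.mem_setOf_eq, Set.mem_union, Set.mem_inter_iff,
      Set.mem_preimage, Set.mem_Ioi, Set.mem_Iio]
    rw [not_and_or, not_le, not_le, lt_min_iff, max_lt_iff]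
  have hdisj : Disjoint (V1 ⁻¹' Set.Ioi p ∩ V2 ⁻¹' Set.Ioi p)
      (V1 ⁻¹' Set.Iio p ∩ V2 ⁻¹' Set.Iio p) := by
    rw [Set.disjoint_left]
    rintro ω ⟨h1, -⟩ ⟨h3, -⟩
    simp only [Set.mem_preimage, Set.mem_Ioi] at h1
    simp only [Set.mem_preimage, Set.mem_Iio] at h3
    linarith
  have hmap1 : ∀ s : Set ℝ, MeasurableSet s → μ (V1 ⁻¹' s) = ν s := by
    intro s hs; rw [← hlaw1, Measure.map_apply hV1 hs]
  have hmap2 : ∀ s : Set ℝ, MeasurableSet s → μ (V2 ⁻¹' s) = ν s := by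
    intro s hs; rw [← hlaw2, Measure.map_apply hV2 hs]
  have hμA1 : μ (V1 ⁻¹' Set.Ioi p ∩ V2 ⁻¹' Set.Ioi p) = ENNReal.ofReal (a^2) := by
    rw [hindep.measure_inter_preimage_eq_mul _ _ measurableSet_Ioi measurableSet_Ioi,
      hmap1 _ measurableSet_Ioi, hmap2 _ measurableSet_Ioi, hIoi,
      ← ENNReal.ofReal_mul ha, sq]
  have hμA2 : μ (V1 ⁻¹' Set.Iio p ∩ V2 ⁻¹' Set.Iio p) = ENNReal.ofReal (b^2) := by
    rw [hindep.measure_inter_preimage_eq_mul _ _ measurableSet_Iio measurableSet_Iio,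
      hmap1 _ measurableSet_Iio, hmap2 _ measurableSet_Iio, hIio,
      ← ENNReal.ofReal_mul hb, sq]
  have hSc : μ Sᶜ = ENNReal.ofReal (a^2 + b^2) := by
    rw [hcompl, measure_union hdisj hA2meas, hμA1, hμA2,
      ENNReal.ofReal_add (by positivity) (by positivity)]
  have htot : μ S + μ Sᶜ = 1 := by
    rw [measure_add_measure_compl hSmeas]; exact measure_univ
  rw [hSc] at htot
  have h1 : (μ S).toReal + (a^2 + b^2) = 1 := by
    have := congrArg ENNReal.toReal htot
    rwa [ENNReal.toReal_add (measure_ne_top μ S) ENNReal.ofReal_ne_top,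
      ENNReal.toReal_ofReal (by positivity), ENNReal.toReal_one] at this
  linarith

theorem stmt_14 {Ω : Type*} [MeasurableSpace Ω] (μ : Measure Ω) [IsProbabilityMeasure μ]
    (ε : ℝ) (hε : ε ∈ Set.Icc (-(1/4) : ℝ) (1/4))
    (V1 V2 : Ω → ℝ) (hV1 : Measurable V1) (hV2 : Measurable V2)
    (hindep : IndepFun V1 V2 μ)
    (ν : Measure ℝ)
    (hν : ν = ENNReal.ofReal ((1 - ε)/4) • Measure.dirac (0:ℝ)
      + ENNReal.ofReal (1/4) • Measure.dirac (1/3 : ℝ)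
      + ENNReal.ofReal (1/4) • Measure.dirac (2/3 : ℝ)
      + ENNReal.ofReal ((1 + ε)/4) • Measure.dirac (1:ℝ))
    (hlaw1 : Measure.map V1 μ = ν) (hlaw2 : Measure.map V2 μ = ν)
    (G : ℝ → ℝ)
    (hG : ∀ p, G p = (μ {ω | min (V1 ω) (V2 ω) ≤ p ∧ p ≤ max (V1 ω) (V2 ω)}).toReal) :
    G (1/3) = 11/16 - ε/8 - ε^2/8 ∧ G (2/3) = 11/16 + ε/8 - ε^2/8
    ∧ G (2/3) - G (1/3) = ε/4 := by
  obtain ⟨hεl, hεu⟩ := hε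
  have hν1 : ν (Set.Ioi (1/3 : ℝ)) = ENNReal.ofReal ((2 + ε)/4) := by
    rw [hν]
    simp only [Measure.add_apply, Measure.smul_apply, smul_eq_mul,
      Measure.dirac_apply' _ measurableSet_Ioi, Set.indicator_apply, Set.mem_Ioi]
    norm_num
    rw [← ENNReal.ofReal_add (by norm_num) (by linarith)]
    ring_nf
  have hν2 : ν (Set.Iio (1/3 : ℝ)) = ENNReal.ofReal ((1 - ε)/4) := by
    rw [hν]
    simp only [Measure.add_apply, Measure.smul_apply, smul_eq_mul,
      Measure.dirac_apply' _ measurableSet_Iio, Set.indicator_apply, Set.mem_Iio]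
    norm_num
  have hν3 : ν (Set.Ioi (2/3 : ℝ)) = ENNReal.ofReal ((1 + ε)/4) := by
    rw [hν]
    simp only [Measure.add_apply, Measure.smul_apply, smul_eq_mul,
      Measure.dirac_apply' _ measurableSet_Ioi, Set.indicator_apply, Set.mem_Ioi]
    norm_num
  have hν4 : ν (Set.Iio (2/3 : ℝ)) = ENNReal.ofReal ((2 - ε)/4) := by
    rw [hν]
    simp only [Measure.add_apply, Measure.smul_apply, smul_eq_mul,
      Measure.dirac_apply' _ measurableSet_Iio, Set.indicator_apply, Set.mem_Iio]
    norm_num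
    rw [← ENNReal.ofReal_add (by linarith) (by norm_num)]
    ring_nf
  have hG1 : G (1/3) = 1 - ((2 + ε)/4)^2 - ((1 - ε)/4)^2 := by
    rw [hG]
    exact aux_G μ V1 V2 hV1 hV2 hindep ν hlaw1 hlaw2 _ _ _ (by linarith) (by linarith) hν1 hν2
  have hG2 : G (2/3) = 1 - ((1 + ε)/4)^2 - ((2 - ε)/4)^2 := by
    rw [hG]
    exact aux_G μ V1 V2 hV1 hV2 hindep ν hlaw1 hlaw2 _ _ _ (by linarith) (by linarith) hν3 hν4
  refine ⟨by rw [hG1]; ring, by rw [hG2]; ring, by rw [hG1, hG2]; ring⟩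
end
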